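/- For all natural numbers n and positive integers k, the order-k Changhee number of the second kind satisfies Ĉh_n^{(k)} = ∑_{ℓ=0}^{n} (-1)^ℓ · s₁(n,ℓ) · E_ℓ^{(k)}. -/

import Mathlib

open Finset

/-- Signed Stirling numbers of the first kind. -/
def s1 : ℕ → ℕ → ℚ
  | 0, 0 => 1
  | 0, _ + 1 => 0
  | n + 1, 0 => -(n : ℚ) * s1 n 0
  | n + 1, l + 1 => s1 n l - (n : ℚ) * s1 n (l + 1)

/-- Stirling numbers of the second kind. -/
def S2 : ℕ → ℕ → ℚ
  | 0, 0 => 1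
  | 0, _ + 1 => 0
  | _ + 1, 0 => 0
  | n + 1, l + 1 => S2 n l + ((l : ℚ) + 1) * S2 n (l + 1)

/-- Order-k Euler numbers. -/
def E (k l : ℕ) : ℚ :=
  ∑ j ∈ range (l + 1), (-1/2 : ℚ)^j * ((k + j - 1).choose j) * (j.factorial : ℚ) * S2 l j

/-- Higher-order Changhee numbers of the second kind. -/
def Chh (k n : ℕ) : ℚ :=
  (n.factorial : ℚ) *
    ∑ i ∈ range (n + 1), ((-1 : ℚ))^i / 2^i * ((k + i - 1).choose i) * (k.choose (n - i))

/-!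
Expanding `E_ℓ^{(k)}` in Stirling numbers of the second kind and summing against
`(-1)^ℓ s₁(n,ℓ)` produces signed Lah numbers, so the right-hand side becomes
`(-1)^n n! ∑_j w_j C(n-1, n-j)`, where `w_j = (-1/2)^j C(k+j-1, j)` is the coefficient of `t^j`
in `(1 + t/2)^(-k)`. The left-hand side is `n! [t^n] ((1+t)/(1+t/2))^k`; writing
`(1+t)/(1+t/2) = 1 + (t/2)/(1+t/2)` and expanding shows that this is
`n! 2^(-n) [t^n] P` with `P = (1+t)^k (1-t)^(n-1)`. Expanding `(1-t)^(n-1)` in powers of `1+t`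
gives `∑_j w_j C(n-1, n-j) = -2^(-n) [t^(k-1)] P` for `n ≥ 1`, and `P` is palindromic up to the
sign `(-1)^(n-1)`, which matches the coefficients of `t^n` and `t^(k-1)`.
-/

/-- The coefficient of `t^j` in `(1 + t/2)^(-k)`. -/
def negHalfBinom (k j : ℕ) : ℚ := (-1/2) ^ j * (k + j - 1).choose j

lemma Chh_eq_sum_negHalfBinom (k n : ℕ) :
    Chh k n = n.factorial * ∑ i ∈ range (n + 1), negHalfBinom k i * k.choose (n - i) := by
  simp only [Chh, negHalfBinom, div_pow]

lemma s1_eq_zero_of_lt : ∀ {n l : ℕ}, n < l → s1 n l = 0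
  | 0, _ + 1, _ => rfl
  | n + 1, l + 1, h => by
    rw [s1, s1_eq_zero_of_lt (by omega), s1_eq_zero_of_lt (by omega : n < l + 1), mul_zero,
      sub_zero]

lemma S2_eq_zero_of_lt : ∀ {l j : ℕ}, l < j → S2 l j = 0
  | 0, _ + 1, _ => rfl
  | l + 1, j + 1, h => by
    rw [S2, S2_eq_zero_of_lt (by omega), S2_eq_zero_of_lt (by omega : l < j + 1), mul_zero,
      add_zero]

def lah : ℕ → ℕ → ℕ
  | 0, 0 => 1
  | 0, _ + 1 => 0
  | _ + 1, 0 => 0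
  | n + 1, j + 1 => lah n j + (n + j + 1) * lah n (j + 1)

lemma lah_eq_zero_of_lt : ∀ {n j : ℕ}, n < j → lah n j = 0
  | 0, _ + 1, _ => rfl
  | n + 1, j + 1, h => by
    rw [lah, lah_eq_zero_of_lt (by omega), lah_eq_zero_of_lt (by omega), mul_zero, add_zero]

lemma factorial_mul_lah {n j : ℕ} (hj : j ≤ n) :
    j.factorial * lah n j = n.factorial * (n - 1).choose (n - j) := by
  induction n generalizing j with
  | zero =>
    obtain rfl : j = 0 := by omega
    rfl
  | succ n ih =>
    cases j with
    | zero => simp [lah]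
    | succ j =>
      rw [lah, Nat.add_sub_cancel, Nat.add_sub_add_right]
      rcases (show j = n ∨ j < n by omega) with rfl | hjn
      · rw [lah_eq_zero_of_lt (Nat.lt_succ_self j), mul_zero, add_zero, Nat.factorial_succ,
          mul_assoc, mul_assoc, ih le_rfl]
        simp
      obtain ⟨b, rfl⟩ : ∃ b, n = j + b + 1 := ⟨n - j - 1, by omega⟩
      have hj := ih (j := j) (by omega)
      have hj1 := ih (j := j + 1) (by omega)
      simp only [show j + b + 1 - 1 = j + b by omega, show j + b + 1 - j = b + 1 by omega,
        show j + b + 1 - (j + 1) = b by omega] at hj hj1 ⊢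
      have habsorb := Nat.choose_succ_right_eq (j + b) b
      rw [Nat.add_sub_cancel] at habsorb
      rw [Nat.factorial_succ (j + b + 1), Nat.choose_succ_succ (j + b) b]
      rw [Nat.factorial_succ] at hj1 ⊢
      zify at *
      linear_combination (↑j + 1) * hj + (2 * ↑j + ↑b + 2) * hj1
        - ((j + b + 1).factorial : ℤ) * habsorb

lemma sum_neg_one_pow_mul_s1_succ (n : ℕ) (f : ℕ → ℚ) :
    ∑ l ∈ range (n + 2), (-1) ^ l * s1 (n + 1) l * f l =
      -∑ l ∈ range (n + 1), (-1) ^ l * s1 n l * f (l + 1)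
        - n * ∑ l ∈ range (n + 1), (-1) ^ l * s1 n l * f l := by
  have hshift : ∑ l ∈ range (n + 1), (-1) ^ l * s1 n l * f l =
      ∑ l ∈ range (n + 1), (-1) ^ (l + 1) * s1 n (l + 1) * f (l + 1)
        + (-1) ^ 0 * s1 n 0 * f 0 := by
    rw [← sum_range_succ' (fun l ↦ (-1) ^ l * s1 n l * f l), sum_range_succ _ (n + 1),
      s1_eq_zero_of_lt (Nat.lt_succ_self n), mul_zero, zero_mul, add_zero]
  rw [hshift, sum_range_succ', mul_add, mul_sum, sub_add_eq_sub_sub, ← sum_neg_distrib,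
    ← sum_sub_distrib, sub_eq_add_neg]
  congr 1
  · exact sum_congr rfl fun l _ ↦ by rw [s1]; ring
  · rw [s1]; ring

lemma sum_neg_one_pow_mul_s1_mul_S2 (n j : ℕ) :
    ∑ l ∈ range (n + 1), (-1) ^ l * s1 n l * S2 l j = (-1) ^ n * lah n j := by
  induction n generalizing j with
  | zero => cases j <;> simp [s1, S2, lah]
  | succ n ih =>
    rw [sum_neg_one_pow_mul_s1_succ, ih]
    cases j with
    | zero => cases n <;> simp [S2, lah]
    | succ j =>
      have hS2 : ∑ l ∈ range (n + 1), (-1) ^ l * s1 n l * S2 (l + 1) (j + 1) =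
          ∑ l ∈ range (n + 1), (-1) ^ l * s1 n l * S2 l j
            + (j + 1) * ∑ l ∈ range (n + 1), (-1) ^ l * s1 n l * S2 l (j + 1) := by
        simp only [S2, mul_sum, ← sum_add_distrib]
        exact sum_congr rfl fun _ _ ↦ by ring
      rw [hS2, ih, ih, lah]
      push_cast
      ring

lemma E_eq_sum_range {k l : ℕ} (N : ℕ) (hl : l ≤ N) :
    E k l = ∑ j ∈ range (N + 1), negHalfBinom k j * j.factorial * S2 l j := by
  unfold E negHalfBinom
  refine sum_subset (range_subset_range.2 (by omega)) fun j hjN hjl ↦ ?_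
  rw [S2_eq_zero_of_lt (by simp at hjN hjl; omega), mul_zero]

lemma sum_neg_one_pow_mul_s1_mul_E (n k : ℕ) :
    ∑ l ∈ range (n + 1), (-1) ^ l * s1 n l * E k l =
      (-1) ^ n * n.factorial *
        ∑ j ∈ range (n + 1), negHalfBinom k j * (n - 1).choose (n - j) := by
  calc ∑ l ∈ range (n + 1), (-1) ^ l * s1 n l * E k l
      = ∑ l ∈ range (n + 1), ∑ j ∈ range (n + 1),
          negHalfBinom k j * j.factorial * ((-1) ^ l * s1 n l * S2 l j) :=
        sum_congr rfl fun l hl ↦ by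
          rw [E_eq_sum_range n (by simpa [Nat.lt_succ_iff] using hl), mul_sum]
          exact sum_congr rfl fun _ _ ↦ by ring
    _ = ∑ j ∈ range (n + 1), negHalfBinom k j * j.factorial * ((-1) ^ n * lah n j) := by
        rw [sum_comm]
        simp_rw [← mul_sum, sum_neg_one_pow_mul_s1_mul_S2]
    _ = _ := by
        rw [mul_sum]
        refine sum_congr rfl fun j hj ↦ ?_
        have hlah : (j.factorial : ℚ) * lah n j = n.factorial * (n - 1).choose (n - j) := by
          exact_mod_cast factorial_mul_lah (by simpa [Nat.lt_succ_iff] using hj)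
        linear_combination (-1) ^ n * negHalfBinom k j * hlah

section PowerSeriesCoeff

open PowerSeries

variable {R : Type*} [CommRing R]

lemma PowerSeries.coeff_one_add_X_pow (m s : ℕ) :
    coeff s ((1 + X : R⟦X⟧) ^ m) = m.choose s := by
  rw [← Polynomial.coe_X, ← Polynomial.coe_one, ← Polynomial.coe_add, ← Polynomial.coe_pow,
    Polynomial.coeff_coe, Polynomial.coeff_one_add_X_pow]

lemma PowerSeries.coeff_one_add_C_mul_X_pow (a : R) (m s : ℕ) :
    coeff s ((1 + C a * X) ^ m) = a ^ s * m.choose s := by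
  rw [← rescale_X, ← map_one (rescale a), ← map_add, ← map_pow, coeff_rescale,
    coeff_one_add_X_pow]

lemma PowerSeries.coeff_rescale_mk_one_pow (a : R) (d s : ℕ) :
    coeff s (rescale a (mk 1) ^ d) = a ^ s * (d + s - 1).choose s := by
  rw [← map_pow, coeff_rescale]
  cases d with
  | zero => cases s <;> simp
  | succ d =>
    rw [mk_one_pow_eq_mk_choose_add, coeff_mk, Nat.add_right_comm, Nat.add_sub_cancel,
      Nat.choose_symm_add]

lemma PowerSeries.rescale_mk_one_mul (a : R) : rescale a (mk 1) * (1 - C a * X) = 1 := by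
  rw [← rescale_X, ← map_one (rescale a), ← map_sub, ← map_mul, mk_one_mul_one_sub_eq_one,
    map_one]

/-- Both sides equal `a ^ (n - t) * (n - 1).choose (n - t)` when `t ≤ n`. -/
lemma PowerSeries.coeff_X_pow_mul_rescale_mk_one_pow (a : R) (n t : ℕ) :
    coeff n (X ^ t * rescale a (mk 1) ^ t) = coeff n (X ^ t * (1 + C a * X) ^ (n - 1)) := by
  rw [coeff_X_pow_mul', coeff_X_pow_mul']
  split_ifs with htn
  · rw [coeff_rescale_mk_one_pow, coeff_one_add_C_mul_X_pow, Nat.add_sub_cancel' htn]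
  · rfl

lemma PowerSeries.one_add_C_mul_X_mul_pow (c : R) (F : R⟦X⟧) (k : ℕ) :
    (1 + C c * X * F) ^ k = ∑ t ∈ range (k + 1), C (c ^ t * k.choose t) * (X ^ t * F ^ t) := by
  rw [add_comm, add_pow]
  refine sum_congr rfl fun t _ ↦ ?_
  rw [map_mul, map_pow, map_natCast]
  ring

end PowerSeriesCoeff

section Reflect

open Polynomial

variable {R : Type*} [CommRing R]

lemma Polynomial.reflect_pow {p : R[X]} {N : ℕ} (hp : p.natDegree ≤ N) (n : ℕ) :
    reflect (n * N) (p ^ n) = reflect N p ^ n := by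
  induction n with
  | zero => simp
  | succ n ih =>
    rw [pow_succ, Nat.succ_mul, reflect_mul _ _ (natDegree_pow_le_of_le n hp) hp, ih, pow_succ]

lemma Polynomial.reflect_one_add_X : reflect 1 (1 + X : R[X]) = 1 + X := by
  rw [reflect_add, reflect_one, ← pow_one X, reflect_monomial, revAt_le le_rfl]
  simp [add_comm]

lemma Polynomial.reflect_one_sub_X : reflect 1 (1 - X : R[X]) = -(1 - X) := by
  rw [reflect_sub, reflect_one, ← pow_one X, reflect_monomial, revAt_le le_rfl]
  simp

lemma Polynomial.coeff_one_add_X_pow_mul_one_sub_X_pow_symm (k m : ℕ) {i : ℕ}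
    (hi : i ≤ k + m) :
    ((1 + X : R[X]) ^ k * (1 - X) ^ m).coeff (k + m - i) =
      (-1) ^ m * ((1 + X : R[X]) ^ k * (1 - X) ^ m).coeff i := by
  have hreflect : reflect (k + m) ((1 + X : R[X]) ^ k * (1 - X) ^ m) =
      C ((-1) ^ m) * ((1 + X) ^ k * (1 - X) ^ m) := by
    have hk : ((1 + X : R[X]) ^ k).natDegree ≤ k * 1 :=
      natDegree_pow_le_of_le k (by compute_degree)
    have hm : ((1 - X : R[X]) ^ m).natDegree ≤ m * 1 :=
      natDegree_pow_le_of_le m (by compute_degree)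
    rw [show k + m = k * 1 + m * 1 by ring, reflect_mul _ _ hk hm, reflect_pow (by compute_degree),
      reflect_pow (by compute_degree), reflect_one_add_X, reflect_one_sub_X, neg_pow, map_pow,
      map_neg, map_one]
    ring
  have h := congrArg (coeff · i) hreflect
  simp only [coeff_reflect, coeff_C_mul, revAt_le hi] at h
  exact h

end Reflect

open PowerSeries in
lemma sum_negHalfBinom_mul_choose_eq_coeff (k n : ℕ) :
    ∑ i ∈ range (n + 1), negHalfBinom k i * k.choose (n - i) =
      (1/2) ^ n *
        ((1 + Polynomial.X) ^ k * (1 - Polynomial.X) ^ (n - 1) : Polynomial ℚ).coeff n := by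
  -- `G = (1 + X/2)⁻¹`
  set G : ℚ⟦X⟧ := rescale (-1/2) (mk 1) with hG_def
  have hG : G * (1 + X) = 1 + C (1/2) * X * G := by
    have hC : C (1/2 : ℚ) + C (1/2) = 1 := by rw [← map_add]; norm_num
    have hneg : C (-1/2 : ℚ) = -C (1/2) := by rw [← map_neg]; norm_num
    linear_combination rescale_mk_one_mul (-1/2 : ℚ) + G * X * hneg - X * G * hC
  calc ∑ i ∈ range (n + 1), negHalfBinom k i * k.choose (n - i)
      = coeff n (G ^ k * (1 + X) ^ k) := by
        rw [coeff_mul, Finset.Nat.sum_antidiagonal_eq_sum_range_succ_mk]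
        exact sum_congr rfl fun i _ ↦ by
          rw [coeff_rescale_mk_one_pow, coeff_one_add_X_pow, negHalfBinom]
    _ = ∑ t ∈ range (k + 1), (1/2 : ℚ) ^ t * k.choose t * coeff n (X ^ t * G ^ t) := by
        rw [← mul_pow, hG, one_add_C_mul_X_mul_pow, map_sum]
        simp_rw [coeff_C_mul]
    _ = ∑ t ∈ range (k + 1),
          (1/2 : ℚ) ^ t * k.choose t * coeff n (X ^ t * (1 + C (-1/2) * X) ^ (n - 1)) := by
        simp_rw [hG_def, coeff_X_pow_mul_rescale_mk_one_pow]
    _ = coeff n ((1 + C (1/2) * X) ^ k * (1 + C (-1/2) * X) ^ (n - 1)) := by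
        have h := one_add_C_mul_X_mul_pow (1/2 : ℚ) 1 k
        simp_rw [mul_one, one_pow, mul_one] at h
        rw [h, sum_mul, map_sum]
        exact sum_congr rfl fun t _ ↦ by rw [mul_assoc (C _), coeff_C_mul]
    _ = (1/2) ^ n * coeff n ((1 + X : ℚ⟦X⟧) ^ k * (1 - X) ^ (n - 1)) := by
        rw [← coeff_rescale]
        simp [rescale_X, sub_eq_add_neg, neg_div]
    _ = _ := by
        rw [← Polynomial.coeff_coe]
        push_cast
        rfl

open Polynomial in
lemma sum_negHalfBinom_mul_choose_succ_sub_eq_coeff (k m : ℕ) (hk : 1 ≤ k) :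
    ∑ j ∈ range (m + 2), negHalfBinom k j * m.choose (m + 1 - j) =
      -(1/2) ^ (m + 1) * ((1 + X : ℚ[X]) ^ k * (1 - X) ^ m).coeff (k - 1) := by
  have hexpand : ((1 + X : ℚ[X]) ^ k * (1 - X) ^ m) =
      ∑ a ∈ range (m + 1), C ((2 : ℚ) ^ m * (-1/2) ^ a * m.choose a) * (1 + X) ^ (k + a) := by
    have h : (1 - X : ℚ[X]) = C 2 * (C (-1/2) * (1 + X) + 1) := by
      have h2 : C (2 : ℚ) = 2 := rfl
      have hinv : C (2 : ℚ) * C (-1/2) = -1 := by rw [← map_mul]; norm_num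
      linear_combination -(1 + X) * hinv - h2
    rw [h, mul_pow, add_pow (C (-1/2) * (1 + X)) 1 m, mul_sum, mul_sum]
    refine sum_congr rfl fun a _ ↦ ?_
    simp only [map_mul, map_pow, map_natCast, mul_pow, pow_add]
    ring
  rw [hexpand, finsetSum_coeff, mul_sum, sum_range_succ']
  unfold negHalfBinom
  simp only [Nat.sub_zero, Nat.choose_succ_self, Nat.cast_zero, mul_zero, add_zero]
  refine sum_congr rfl fun a ha ↦ ?_
  have ham : a ≤ m := Nat.lt_succ_iff.1 (mem_range.1 ha)
  rw [coeff_C_mul, coeff_one_add_X_pow, show k + (a + 1) - 1 = k + a by omega,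
    show m + 1 - (a + 1) = m - a by omega, Nat.choose_symm ham,
    ← Nat.choose_symm_of_eq_add (show k + a = (a + 1) + (k - 1) by omega)]
  have h2 : (1/2 : ℚ) ^ m * 2 ^ m = 1 := by rw [← mul_pow]; norm_num
  linear_combination
    ((1/2) * (-1/2) ^ a * ((k + a).choose (a + 1) : ℚ) * (m.choose a : ℚ)) * h2

lemma sum_negHalfBinom_mul_choose_eq_neg_one_pow_mul_sum (k n : ℕ) (hk : 1 ≤ k) :
    ∑ i ∈ range (n + 1), negHalfBinom k i * k.choose (n - i) =
      (-1) ^ n * ∑ j ∈ range (n + 1), negHalfBinom k j * (n - 1).choose (n - j) := by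
  cases n with
  | zero => simp
  | succ m =>
    have hsymm := Polynomial.coeff_one_add_X_pow_mul_one_sub_X_pow_symm (R := ℚ) k m
      (i := k - 1) (by omega)
    rw [show k + m - (k - 1) = m + 1 by omega] at hsymm
    rw [sum_negHalfBinom_mul_choose_eq_coeff, Nat.add_sub_cancel,
      sum_negHalfBinom_mul_choose_succ_sub_eq_coeff k m hk, hsymm]
    ring

theorem second_changhee_eq_stirling_euler (n k : ℕ) (hk : 1 ≤ k) :
    Chh k n = ∑ l ∈ range (n + 1), (-1 : ℚ)^l * s1 n l * E k l := by
  rw [Chh_eq_sum_negHalfBinom, sum_negHalfBinom_mul_choose_eq_neg_one_pow_mul_sum k n hk,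
    sum_neg_one_pow_mul_s1_mul_E]
  ring
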